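/- Let f be a smooth real-valued function on a domain of ℍⁿ satisfying f_{αᾱ} = -n g with g = |∂f|² + e^{(2+p)f} - i f₀. With D_{αβ} = f_{αβ} - 2f_α f_β, D_α = D_{αβ} f_β̄, E_α = (f_{αβ̄} + g δ_{αβ̄}) f_β, G_α = i f_{0α} + g f_α, one has D_{α,ᾱ} = |D_{αβ}|² + 2 f_ᾱ D_α - 2 f_α E_ᾱ + 2(n+1) f_ᾱ G_α - n f_ᾱ ḡ_α (summation over repeated indices). -/

import Mathlib

noncomputable section

open Complex

/-- The left-invariant vector field `Z_α = ∂/∂z^α + i z̄^α ∂/∂t` on the Heisenberg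
group `ℍⁿ = ℂⁿ × ℝ`, acting on complex-valued functions. -/
def Zc (n : ℕ) (α : Fin n) (f : (Fin n → ℂ) × ℝ → ℂ) (x : (Fin n → ℂ) × ℝ) : ℂ :=
  (1 / 2) * (fderiv ℝ f x (Pi.single α 1, 0) - I * fderiv ℝ f x (Pi.single α I, 0)) +
    I * (starRingEnd ℂ) (x.1 α) * fderiv ℝ f x (0, 1)

/-- The conjugate vector field `Z̄_α = ∂/∂z̄^α - i z^α ∂/∂t` on `ℍⁿ`. -/
def Zb (n : ℕ) (α : Fin n) (f : (Fin n → ℂ) × ℝ → ℂ) (x : (Fin n → ℂ) × ℝ) : ℂ :=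
  (1 / 2) * (fderiv ℝ f x (Pi.single α 1, 0) + I * fderiv ℝ f x (Pi.single α I, 0)) -
    I * (x.1 α) * fderiv ℝ f x (0, 1)

/-- The derivative `f₀ = ∂f/∂t` on `ℍⁿ = ℂⁿ × ℝ`. -/
def Tt (n : ℕ) (f : (Fin n → ℂ) × ℝ → ℂ) (x : (Fin n → ℂ) × ℝ) : ℂ :=
  fderiv ℝ f x (0, 1)
/-- The complexification of a real-valued function on `ℍⁿ`. -/
def Fc (n : ℕ) (f : (Fin n → ℂ) × ℝ → ℝ) : (Fin n → ℂ) × ℝ → ℂ :=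
  fun x => (f x : ℂ)

/-- The auxiliary function `g = |∂f|² + e^{(2+p)f} - i f₀`, where
`|∂f|² = Σ_α f_α f_ᾱ`. -/
def gJL (n : ℕ) (p : ℝ) (f : (Fin n → ℂ) × ℝ → ℝ) (x : (Fin n → ℂ) × ℝ) : ℂ :=
  (∑ α, Zc n α (Fc n f) x * Zb n α (Fc n f) x) +
    (Real.exp ((2 + p) * f x) : ℂ) - I * Tt n (Fc n f) x

/-- The tensor `E_{αβ̄} = f_{αβ̄} + g δ_{αβ̄}`. -/
def Etens (n : ℕ) (p : ℝ) (f : (Fin n → ℂ) × ℝ → ℝ) (α β : Fin n)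
    (x : (Fin n → ℂ) × ℝ) : ℂ :=
  Zb n β (Zc n α (Fc n f)) x + gJL n p f x * (if α = β then 1 else 0)

/-- The vector `E_α = E_{αβ̄} f_β`. -/
def Evec (n : ℕ) (p : ℝ) (f : (Fin n → ℂ) × ℝ → ℝ) (α : Fin n)
    (x : (Fin n → ℂ) × ℝ) : ℂ :=
  ∑ β, Etens n p f α β x * Zc n β (Fc n f) x

/-- The tensor `D_{αβ} = f_{αβ} - 2 f_α f_β`. -/
def Dtens (n : ℕ) (f : (Fin n → ℂ) × ℝ → ℝ) (α β : Fin n)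
    (x : (Fin n → ℂ) × ℝ) : ℂ :=
  Zc n β (Zc n α (Fc n f)) x - 2 * Zc n α (Fc n f) x * Zc n β (Fc n f) x

/-- The vector `D_α = D_{αβ} f_β̄`. -/
def Dvec (n : ℕ) (f : (Fin n → ℂ) × ℝ → ℝ) (α : Fin n)
    (x : (Fin n → ℂ) × ℝ) : ℂ :=
  ∑ β, Dtens n f α β x * Zb n β (Fc n f) x

/-- The vector `G_α = i f_{0α} + g f_α`. -/
def Gvec (n : ℕ) (p : ℝ) (f : (Fin n → ℂ) × ℝ → ℝ) (α : Fin n)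
    (x : (Fin n → ℂ) × ℝ) : ℂ :=
  I * Zc n α (Tt n (Fc n f)) x + gJL n p f x * Zc n α (Fc n f) x


namespace JLaux

open ComplexConjugate
open scoped ContDiff

variable {n : ℕ}

abbrev H (n : ℕ) : Type := (Fin n → ℂ) × ℝ

def ev (α : Fin n) : H n := (Pi.single α 1, 0)
def iev (α : Fin n) : H n := (Pi.single α I, 0)
def tv : H n := (0, 1)

theorem Zc_def (α : Fin n) (h : H n → ℂ) (x : H n) :
    Zc n α h x = (1/2) * (fderiv ℝ h x (ev α) - I * fderiv ℝ h x (iev α))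
      + I * conj (x.1 α) * fderiv ℝ h x tv := rfl

theorem Zb_def (α : Fin n) (h : H n → ℂ) (x : H n) :
    Zb n α h x = (1/2) * (fderiv ℝ h x (ev α) + I * fderiv ℝ h x (iev α))
      - I * (x.1 α) * fderiv ℝ h x tv := rfl

theorem Tt_def (h : H n → ℂ) (x : H n) : Tt n h x = fderiv ℝ h x tv := rfl

section first_order

variable {h k : H n → ℂ} {x : H n} (α : Fin n)

theorem Zc_congr (hhk : h =ᶠ[nhds x] k) : Zc n α h x = Zc n α k x := by
  simp only [Zc_def, hhk.fderiv_eq]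

theorem Zb_congr (hhk : h =ᶠ[nhds x] k) : Zb n α h x = Zb n α k x := by
  simp only [Zb_def, hhk.fderiv_eq]

theorem Tt_congr (hhk : h =ᶠ[nhds x] k) : Tt n h x = Tt n k x := by
  simp only [Tt_def, hhk.fderiv_eq]

theorem Zc_add (hh : DifferentiableAt ℝ h x) (hk : DifferentiableAt ℝ k x) :
    Zc n α (fun y => h y + k y) x = Zc n α h x + Zc n α k x := by
  simp only [Zc_def, fderiv_fun_add hh hk, ContinuousLinearMap.add_apply]; ring

theorem Zb_add (hh : DifferentiableAt ℝ h x) (hk : DifferentiableAt ℝ k x) :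
    Zb n α (fun y => h y + k y) x = Zb n α h x + Zb n α k x := by
  simp only [Zb_def, fderiv_fun_add hh hk, ContinuousLinearMap.add_apply]; ring

theorem Zc_const_mul (hh : DifferentiableAt ℝ h x) (c : ℂ) :
    Zc n α (fun y => c * h y) x = c * Zc n α h x := by
  simp only [Zc_def, fderiv_const_mul hh c, ContinuousLinearMap.smul_apply, smul_eq_mul]; ring

theorem Zb_const_mul (hh : DifferentiableAt ℝ h x) (c : ℂ) :
    Zb n α (fun y => c * h y) x = c * Zb n α h x := by
  simp only [Zb_def, fderiv_const_mul hh c, ContinuousLinearMap.smul_apply, smul_eq_mul]; ring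

theorem Zc_mul (hh : DifferentiableAt ℝ h x) (hk : DifferentiableAt ℝ k x) :
    Zc n α (fun y => h y * k y) x = Zc n α h x * k x + h x * Zc n α k x := by
  simp only [Zc_def, fderiv_fun_mul hh hk, ContinuousLinearMap.add_apply,
    ContinuousLinearMap.smul_apply, smul_eq_mul]; ring

theorem Zb_mul (hh : DifferentiableAt ℝ h x) (hk : DifferentiableAt ℝ k x) :
    Zb n α (fun y => h y * k y) x = Zb n α h x * k x + h x * Zb n α k x := by
  simp only [Zb_def, fderiv_fun_mul hh hk, ContinuousLinearMap.add_apply,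
    ContinuousLinearMap.smul_apply, smul_eq_mul]; ring

theorem Zc_sub (hh : DifferentiableAt ℝ h x) (hk : DifferentiableAt ℝ k x) :
    Zc n α (fun y => h y - k y) x = Zc n α h x - Zc n α k x := by
  simp only [Zc_def, fderiv_fun_sub hh hk, ContinuousLinearMap.sub_apply]; ring

theorem Zb_sub (hh : DifferentiableAt ℝ h x) (hk : DifferentiableAt ℝ k x) :
    Zb n α (fun y => h y - k y) x = Zb n α h x - Zb n α k x := by
  simp only [Zb_def, fderiv_fun_sub hh hk, ContinuousLinearMap.sub_apply]; ring

theorem Zc_sum {ι : Type*} (s : Finset ι) (g : ι → H n → ℂ)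
    (hg : ∀ i ∈ s, DifferentiableAt ℝ (g i) x) :
    Zc n α (fun y => ∑ i ∈ s, g i y) x = ∑ i ∈ s, Zc n α (g i) x := by
  simp only [Zc_def, fderiv_fun_sum hg, ContinuousLinearMap.coe_sum', Finset.sum_apply,
    Finset.mul_sum]
  rw [← Finset.sum_sub_distrib, Finset.mul_sum, ← Finset.sum_add_distrib]

theorem Zb_sum {ι : Type*} (s : Finset ι) (g : ι → H n → ℂ)
    (hg : ∀ i ∈ s, DifferentiableAt ℝ (g i) x) :
    Zb n α (fun y => ∑ i ∈ s, g i y) x = ∑ i ∈ s, Zb n α (g i) x := by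
  simp only [Zb_def, fderiv_fun_sum hg, ContinuousLinearMap.coe_sum', Finset.sum_apply,
    Finset.mul_sum]
  rw [← Finset.sum_add_distrib, Finset.mul_sum, ← Finset.sum_sub_distrib]

theorem fderiv_conj_apply (h : H n → ℂ) (x v : H n) :
    fderiv ℝ (fun y => conj (h y)) x v = conj (fderiv ℝ h x v) := by
  have : (fun y => conj (h y)) = (Complex.conjCLE : ℂ → ℂ) ∘ h := by
    funext y; simp
  rw [this, Complex.conjCLE.comp_fderiv]; simp

theorem Zc_conj : Zc n α (fun y => conj (h y)) x = conj (Zb n α h x) := by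
  simp only [Zc_def, Zb_def, fderiv_conj_apply, map_sub, map_add, map_mul, Complex.conj_conj,
    Complex.conj_I, map_ofNat, map_one, map_div₀]
  ring

theorem Zb_conj : Zb n α (fun y => conj (h y)) x = conj (Zc n α h x) := by
  simp only [Zc_def, Zb_def, fderiv_conj_apply, map_sub, map_add, map_mul, Complex.conj_conj,
    Complex.conj_I, map_ofNat, map_one, map_div₀]
  ring

theorem Tt_conj : Tt n (fun y => conj (h y)) x = conj (Tt n h x) := by
  simp only [Tt_def, fderiv_conj_apply]

end first_order

section smooth

variable {U : Set (H n)} {h : H n → ℂ} {x : H n}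

theorem cdo_diffAt {E : Type*} [NormedAddCommGroup E] [NormedSpace ℝ E] {g : H n → E}
    (hU : IsOpen U) (hg : ContDiffOn ℝ ∞ g U) (hx : x ∈ U) :
    DifferentiableAt ℝ g x :=
  ((hg.differentiableOn (by simp)).differentiableAt (hU.mem_nhds hx))

theorem cdo_fderiv (hU : IsOpen U) (hh : ContDiffOn ℝ ∞ h U) :
    ContDiffOn ℝ ∞ (fderiv ℝ h) U :=
  ((contDiffOn_infty_iff_fderiv_of_isOpen hU).1 hh).2

theorem cdo_pd (hU : IsOpen U) (hh : ContDiffOn ℝ ∞ h U) (v : H n) :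
    ContDiffOn ℝ ∞ (fun y => fderiv ℝ h y v) U :=
  (cdo_fderiv hU hh).clm_apply contDiffOn_const

def coordCLM (β : Fin n) : H n →L[ℝ] ℂ :=
  (ContinuousLinearMap.proj β).comp (ContinuousLinearMap.fst ℝ (Fin n → ℂ) ℝ)

def coordbCLM (β : Fin n) : H n →L[ℝ] ℂ :=
  Complex.conjCLE.toContinuousLinearMap.comp (coordCLM β)

theorem coordCLM_apply (β : Fin n) (y : H n) : coordCLM β y = y.1 β := rfl

theorem coordbCLM_apply (β : Fin n) (y : H n) : coordbCLM β y = conj (y.1 β) := by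
  simp [coordbCLM, coordCLM]

theorem fderiv_coord (β : Fin n) (x v : H n) :
    fderiv ℝ (fun y : H n => y.1 β) x v = v.1 β := by
  have e : (fun y : H n => y.1 β) = ⇑(coordCLM β) := rfl
  rw [e, ContinuousLinearMap.fderiv]; rfl

theorem fderiv_coordb (β : Fin n) (x v : H n) :
    fderiv ℝ (fun y : H n => conj (y.1 β)) x v = conj (v.1 β) := by
  have e : (fun y : H n => conj (y.1 β)) = ⇑(coordbCLM β) := by
    funext y; rw [coordbCLM_apply]
  rw [e, ContinuousLinearMap.fderiv, coordbCLM_apply]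

theorem diffAt_coord (β : Fin n) : DifferentiableAt ℝ (fun y : H n => y.1 β) x :=
  (coordCLM β).differentiableAt

theorem diffAt_coordb (β : Fin n) : DifferentiableAt ℝ (fun y : H n => conj (y.1 β)) x := by
  have e : (fun y : H n => conj (y.1 β)) = ⇑(coordbCLM β) := by
    funext y; rw [coordbCLM_apply]
  rw [e]; exact (coordbCLM β).differentiableAt

theorem contDiffOn_Zc (hU : IsOpen U) (hh : ContDiffOn ℝ ∞ h U) (α : Fin n) :
    ContDiffOn ℝ ∞ (Zc n α h) U := by
  have hcc : ContDiff ℝ ∞ (fun y : H n => I * conj (y.1 α)) := by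
    have e : (fun y : H n => I * conj (y.1 α)) = fun y => I * coordbCLM α y := by
      funext y; rw [coordbCLM_apply]
    rw [e]; exact contDiff_const.mul (coordbCLM α).contDiff
  show ContDiffOn ℝ ∞ (fun x => (1/2 : ℂ) * (fderiv ℝ h x (ev α) - I * fderiv ℝ h x (iev α))
    + I * conj (x.1 α) * fderiv ℝ h x tv) U
  exact (contDiffOn_const.mul ((cdo_pd hU hh (ev α)).sub
    (contDiffOn_const.mul (cdo_pd hU hh (iev α))))).add
    ((hcc.contDiffOn).mul (cdo_pd hU hh tv))

theorem contDiffOn_Zb (hU : IsOpen U) (hh : ContDiffOn ℝ ∞ h U) (α : Fin n) :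
    ContDiffOn ℝ ∞ (Zb n α h) U := by
  have hcc : ContDiff ℝ ∞ (fun y : H n => I * (y.1 α)) := by
    have e : (fun y : H n => I * (y.1 α)) = fun y => I * coordCLM α y := rfl
    rw [e]; exact contDiff_const.mul (coordCLM α).contDiff
  show ContDiffOn ℝ ∞ (fun x => (1/2 : ℂ) * (fderiv ℝ h x (ev α) + I * fderiv ℝ h x (iev α))
    - I * (x.1 α) * fderiv ℝ h x tv) U
  exact (contDiffOn_const.mul ((cdo_pd hU hh (ev α)).add
    (contDiffOn_const.mul (cdo_pd hU hh (iev α))))).sub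
    ((hcc.contDiffOn).mul (cdo_pd hU hh tv))

theorem contDiffOn_Tt (hU : IsOpen U) (hh : ContDiffOn ℝ ∞ h U) :
    ContDiffOn ℝ ∞ (Tt n h) U :=
  cdo_pd hU hh tv

theorem snd_symm (hU : IsOpen U) (hh : ContDiffOn ℝ ∞ h U) (hx : x ∈ U) (v w : H n) :
    fderiv ℝ (fun y => fderiv ℝ h y v) x w = fderiv ℝ (fun y => fderiv ℝ h y w) x v := by
  have hdf : DifferentiableAt ℝ (fderiv ℝ h) x := cdo_diffAt hU (cdo_fderiv hU hh) hx
  have key : ∀ u w : H n, fderiv ℝ (fun y => fderiv ℝ h y u) x w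
      = fderiv ℝ (fderiv ℝ h) x w u := by
    intro u w
    rw [fderiv_clm_apply hdf (differentiableAt_const u)]
    simp
  have hev : ∀ᶠ y in nhds x, HasFDerivAt h (fderiv ℝ h y) y := by
    filter_upwards [hU.mem_nhds hx] with y hy using (cdo_diffAt hU hh hy).hasFDerivAt
  rw [key, key]
  exact second_derivative_symmetric_of_eventually hev hdf.hasFDerivAt w v

end smooth

section second_order

variable {U : Set (H n)} {h : H n → ℂ} {x : H n}

theorem fderiv_Tt_apply (v : H n) :
    fderiv ℝ (Tt n h) x v = fderiv ℝ (fun y => fderiv ℝ h y tv) x v := rfl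

theorem fderiv_Zc_apply (hU : IsOpen U) (hh : ContDiffOn ℝ ∞ h U) (hx : x ∈ U)
    (α : Fin n) (v : H n) :
    fderiv ℝ (Zc n α h) x v
      = (1/2) * (fderiv ℝ (fun y => fderiv ℝ h y (ev α)) x v
          - I * fderiv ℝ (fun y => fderiv ℝ h y (iev α)) x v)
        + (I * conj (v.1 α) * fderiv ℝ h x tv
          + I * conj (x.1 α) * fderiv ℝ (fun y => fderiv ℝ h y tv) x v) := by
  have hp : ∀ w, DifferentiableAt ℝ (fun y => fderiv ℝ h y w) x :=
    fun w => cdo_diffAt hU (cdo_pd hU hh w) hx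
  have hc : DifferentiableAt ℝ (fun y : H n => I * conj (y.1 α)) x :=
    (diffAt_coordb α).const_mul I
  have e : Zc n α h = fun y => (1/2 : ℂ) * (fderiv ℝ h y (ev α) - I * fderiv ℝ h y (iev α))
      + I * conj (y.1 α) * fderiv ℝ h y tv := rfl
  rw [e, fderiv_fun_add (((hp (ev α)).fun_sub ((hp (iev α)).const_mul I)).const_mul _)
        (hc.fun_mul (hp tv)),
      fderiv_const_mul ((hp (ev α)).fun_sub ((hp (iev α)).const_mul I)),
      fderiv_fun_sub (hp (ev α)) ((hp (iev α)).const_mul I),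
      fderiv_const_mul (hp (iev α)) I,
      fderiv_fun_mul hc (hp tv),
      fderiv_const_mul (diffAt_coordb α) I]
  simp only [ContinuousLinearMap.add_apply, ContinuousLinearMap.smul_apply,
    ContinuousLinearMap.sub_apply, smul_eq_mul, fderiv_coordb]
  ring

theorem fderiv_Zb_apply (hU : IsOpen U) (hh : ContDiffOn ℝ ∞ h U) (hx : x ∈ U)
    (β : Fin n) (v : H n) :
    fderiv ℝ (Zb n β h) x v
      = (1/2) * (fderiv ℝ (fun y => fderiv ℝ h y (ev β)) x v
          + I * fderiv ℝ (fun y => fderiv ℝ h y (iev β)) x v)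
        - (I * (v.1 β) * fderiv ℝ h x tv
          + I * (x.1 β) * fderiv ℝ (fun y => fderiv ℝ h y tv) x v) := by
  have hp : ∀ w, DifferentiableAt ℝ (fun y => fderiv ℝ h y w) x :=
    fun w => cdo_diffAt hU (cdo_pd hU hh w) hx
  have hc : DifferentiableAt ℝ (fun y : H n => I * (y.1 β)) x :=
    (diffAt_coord β).const_mul I
  have e : Zb n β h = fun y => (1/2 : ℂ) * (fderiv ℝ h y (ev β) + I * fderiv ℝ h y (iev β))
      - I * (y.1 β) * fderiv ℝ h y tv := rfl
  rw [e, fderiv_fun_sub (((hp (ev β)).fun_add ((hp (iev β)).const_mul I)).const_mul _)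
        (hc.fun_mul (hp tv)),
      fderiv_const_mul ((hp (ev β)).fun_add ((hp (iev β)).const_mul I)),
      fderiv_fun_add (hp (ev β)) ((hp (iev β)).const_mul I),
      fderiv_const_mul (hp (iev β)) I,
      fderiv_fun_mul hc (hp tv),
      fderiv_const_mul (diffAt_coord β) I]
  simp only [ContinuousLinearMap.add_apply, ContinuousLinearMap.smul_apply,
    ContinuousLinearMap.sub_apply, smul_eq_mul, fderiv_coord]
  ring

end second_order

section commutators

variable {U : Set (H n)} {h : H n → ℂ} {x : H n}

theorem comm3 (hU : IsOpen U) (hh : ContDiffOn ℝ ∞ h U) (hx : x ∈ U) (α : Fin n) :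
    Zc n α (Tt n h) x = Tt n (Zc n α h) x := by
  rw [Zc_def α (Tt n h) x, Tt_def, fderiv_Zc_apply hU hh hx α tv,
      fderiv_Tt_apply, fderiv_Tt_apply, fderiv_Tt_apply,
      snd_symm hU hh hx tv (ev α), snd_symm hU hh hx tv (iev α)]
  simp only [tv, Pi.zero_apply, map_zero, mul_zero, zero_mul, add_zero, zero_add]

theorem comm2 (hU : IsOpen U) (hh : ContDiffOn ℝ ∞ h U) (hx : x ∈ U) (α β : Fin n) :
    Zc n α (Zc n β h) x = Zc n β (Zc n α h) x := by
  rw [Zc_def α (Zc n β h) x, Zc_def β (Zc n α h) x,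
      fderiv_Zc_apply hU hh hx β (ev α), fderiv_Zc_apply hU hh hx β (iev α),
      fderiv_Zc_apply hU hh hx β tv,
      fderiv_Zc_apply hU hh hx α (ev β), fderiv_Zc_apply hU hh hx α (iev β),
      fderiv_Zc_apply hU hh hx α tv,
      snd_symm hU hh hx (ev β) (ev α), snd_symm hU hh hx (iev β) (ev α),
      snd_symm hU hh hx tv (ev α), snd_symm hU hh hx (ev β) (iev α),
      snd_symm hU hh hx (iev β) (iev α), snd_symm hU hh hx tv (iev α),
      snd_symm hU hh hx (ev β) tv, snd_symm hU hh hx (iev β) tv]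
  simp only [ev, iev, tv, Pi.single_apply, Pi.zero_apply, map_zero, apply_ite (starRingEnd ℂ),
    map_one, Complex.conj_I, mul_zero, zero_mul, add_zero, zero_add]
  by_cases hab : α = β
  · subst hab; simp only [if_pos rfl, if_true]
    ring_nf
  · simp only [if_neg hab, if_neg (Ne.symm hab), mul_zero, zero_mul, add_zero, zero_add]
    all_goals ring

theorem comm1 (hU : IsOpen U) (hh : ContDiffOn ℝ ∞ h U) (hx : x ∈ U) (α β : Fin n) :
    Zc n α (Zb n β h) x
      = Zb n β (Zc n α h) x - 2 * I * (if α = β then 1 else 0) * Tt n h x := by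
  rw [Zc_def α (Zb n β h) x, Zb_def β (Zc n α h) x, Tt_def,
      fderiv_Zb_apply hU hh hx β (ev α), fderiv_Zb_apply hU hh hx β (iev α),
      fderiv_Zb_apply hU hh hx β tv,
      fderiv_Zc_apply hU hh hx α (ev β), fderiv_Zc_apply hU hh hx α (iev β),
      fderiv_Zc_apply hU hh hx α tv,
      snd_symm hU hh hx (ev β) (ev α), snd_symm hU hh hx (iev β) (ev α),
      snd_symm hU hh hx tv (ev α), snd_symm hU hh hx (ev β) (iev α),
      snd_symm hU hh hx (iev β) (iev α), snd_symm hU hh hx tv (iev α),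
      snd_symm hU hh hx (ev β) tv, snd_symm hU hh hx (iev β) tv]
  simp only [ev, iev, tv, Pi.single_apply, Pi.zero_apply, map_zero, apply_ite (starRingEnd ℂ),
    map_one, Complex.conj_I, mul_zero, zero_mul, add_zero, zero_add]
  by_cases hab : α = β
  · subst hab; simp only [if_pos rfl, if_true]
    ring_nf
    rw [show (I:ℂ)^3 = -I from by
      rw [show (3:ℕ) = 2+1 from rfl, pow_add, pow_one, Complex.I_sq]; ring]
    ring
  · simp only [if_neg hab, if_neg (Ne.symm hab), mul_zero, zero_mul, add_zero, zero_add]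
    all_goals ring

end commutators

section conjfacts

variable {p : ℝ} {f : H n → ℝ}

theorem conj_Fc : (fun y => conj (Fc n f y)) = Fc n f :=
  funext fun y => Complex.conj_ofReal _

theorem conj_Zc (α : Fin n) (y : H n) :
    conj (Zc n α (Fc n f) y) = Zb n α (Fc n f) y := by
  have h := Zb_conj (h := Fc n f) (x := y) α
  rw [conj_Fc] at h
  exact h.symm

theorem conj_Zb (α : Fin n) (y : H n) :
    conj (Zb n α (Fc n f) y) = Zc n α (Fc n f) y := by
  rw [← conj_Zc α y, Complex.conj_conj]

theorem conj_Tt (y : H n) : conj (Tt n (Fc n f) y) = Tt n (Fc n f) y := by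
  have h := Tt_conj (h := Fc n f) (x := y)
  rw [conj_Fc] at h
  exact h.symm

theorem fun_conj_Zc (α : Fin n) :
    (fun y => conj (Zc n α (Fc n f) y)) = Zb n α (Fc n f) :=
  funext fun y => conj_Zc α y

theorem conj_ZbZc (α β : Fin n) (y : H n) :
    conj (Zb n β (Zc n α (Fc n f)) y) = Zc n β (Zb n α (Fc n f)) y := by
  rw [← fun_conj_Zc α, Zc_conj]

theorem conj_ZcZc (α β : Fin n) (y : H n) :
    conj (Zc n β (Zc n α (Fc n f)) y) = Zb n β (Zb n α (Fc n f)) y := by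
  rw [← fun_conj_Zc α, Zb_conj]

theorem conj_g (p : ℝ) (f : H n → ℝ) (y : H n) :
    conj (gJL n p f y) = gJL n p f y + 2 * I * Tt n (Fc n f) y := by
  have h1 : ∀ α : Fin n, conj (Zc n α (Fc n f) y * Zb n α (Fc n f) y)
      = Zc n α (Fc n f) y * Zb n α (Fc n f) y := fun α => by
    rw [map_mul, conj_Zc, conj_Zb]; ring
  unfold gJL
  rw [map_sub, map_add, map_sum, map_mul, Complex.conj_I, Complex.conj_ofReal, conj_Tt]
  rw [Finset.sum_congr rfl fun α _ => h1 α]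
  ring

end conjfacts

section smoothg

variable {p : ℝ} {U : Set (H n)} {f : H n → ℝ}

theorem contDiffOn_Fc (hf : ContDiffOn ℝ (⊤ : ℕ∞) f U) : ContDiffOn ℝ ∞ (Fc n f) U := by
  have : ContDiffOn ℝ ∞ (⇑Complex.ofRealCLM ∘ f) U :=
    Complex.ofRealCLM.contDiff.comp_contDiffOn (hf.of_le (by simp))
  exact this

theorem contDiffOn_g (hU : IsOpen U) (hf : ContDiffOn ℝ (⊤ : ℕ∞) f U) :
    ContDiffOn ℝ ∞ (gJL n p f) U := by
  have hF := contDiffOn_Fc (n := n) hf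
  have hsum : ContDiffOn ℝ ∞
      (fun y => ∑ α, Zc n α (Fc n f) y * Zb n α (Fc n f) y) U :=
    ContDiffOn.sum fun α _ => (contDiffOn_Zc hU hF α).mul (contDiffOn_Zb hU hF α)
  have hexp : ContDiffOn ℝ ∞ (fun y => ((Real.exp ((2 + p) * f y) : ℝ) : ℂ)) U := by
    have h1 : ContDiffOn ℝ ∞ (fun y => Real.exp ((2 + p) * f y)) U :=
      Real.contDiff_exp.comp_contDiffOn (contDiffOn_const.mul (hf.of_le (by simp)))
    exact Complex.ofRealCLM.contDiff.comp_contDiffOn h1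
  have hTt : ContDiffOn ℝ ∞ (Tt n (Fc n f)) U := contDiffOn_Tt hU hF
  show ContDiffOn ℝ ∞ (fun y => (∑ α, Zc n α (Fc n f) y * Zb n α (Fc n f) y)
    + ((Real.exp ((2 + p) * f y) : ℝ) : ℂ) - I * Tt n (Fc n f) y) U
  exact (hsum.add hexp).sub (contDiffOn_const.mul hTt)

end smoothg

section mainlemma

open scoped ContDiff

theorem main (n : ℕ) (p : ℝ) (U : Set (H n)) (hU : IsOpen U)
    (f : H n → ℝ) (hf : ContDiffOn ℝ (⊤ : ℕ∞) f U)
    (hpde : ∀ x ∈ U, ∑ α, Zb n α (Zc n α (Fc n f)) x = -(n : ℂ) * gJL n p f x)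
    (x : H n) (hx : x ∈ U) :
    ∑ α, Zb n α (Dvec n f α) x =
      (∑ α, ∑ β, Dtens n f α β x * (starRingEnd ℂ) (Dtens n f α β x)) +
        2 * (∑ α, Zb n α (Fc n f) x * Dvec n f α x) -
        2 * (∑ α, Zc n α (Fc n f) x * (starRingEnd ℂ) (Evec n p f α x)) +
        2 * ((n : ℂ) + 1) * (∑ α, Zb n α (Fc n f) x * Gvec n p f α x) -
        (n : ℂ) * ∑ α, Zb n α (Fc n f) x *
          Zc n α (fun y => (starRingEnd ℂ) (gJL n p f y)) x := by
  have hxU : U ∈ nhds x := hU.mem_nhds hx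
  have hF : ContDiffOn ℝ ∞ (Fc n f) U := contDiffOn_Fc hf
  have hg : ContDiffOn ℝ ∞ (gJL n p f) U := contDiffOn_g hU hf
  have hZc : ∀ γ, ContDiffOn ℝ ∞ (Zc n γ (Fc n f)) U := fun γ => contDiffOn_Zc hU hF γ
  have hZb : ∀ γ, ContDiffOn ℝ ∞ (Zb n γ (Fc n f)) U := fun γ => contDiffOn_Zb hU hF γ
  have hZcZc : ∀ γ δ, ContDiffOn ℝ ∞ (Zc n δ (Zc n γ (Fc n f))) U :=
    fun γ δ => contDiffOn_Zc hU (hZc γ) δ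
  have hZbZc : ∀ γ δ, ContDiffOn ℝ ∞ (Zb n δ (Zc n γ (Fc n f))) U :=
    fun γ δ => contDiffOn_Zb hU (hZc γ) δ
  have hTtF : ContDiffOn ℝ ∞ (Tt n (Fc n f)) U := contDiffOn_Tt hU hF
  have dAt : ∀ {h : H n → ℂ}, ContDiffOn ℝ ∞ h U → DifferentiableAt ℝ h x :=
    fun hh => cdo_diffAt hU hh hx
  have hDt : ∀ γ δ, ContDiffOn ℝ ∞ (Dtens n f γ δ) U := by
    intro γ δ
    show ContDiffOn ℝ ∞ (fun y => Zc n δ (Zc n γ (Fc n f)) y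
      - 2 * Zc n γ (Fc n f) y * Zc n δ (Fc n f) y) U
    exact (hZcZc γ δ).sub ((contDiffOn_const.mul (hZc γ)).mul (hZc δ))
  have hpdex := hpde x hx
  have tcomm : ∀ β, Tt n (Zc n β (Fc n f)) x = Zc n β (Tt n (Fc n f)) x :=
    fun β => (comm3 hU hF hx β).symm
  have hcomm2x : ∀ γ δ, Zc n γ (Zc n δ (Fc n f)) x = Zc n δ (Zc n γ (Fc n f)) x :=
    fun γ δ => comm2 hU hF hx γ δ
  -- derivative of the PDE (identity (2.12))
  have key3 : ∀ β, ∑ α, Zb n α (Zc n α (Zc n β (Fc n f))) x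
      = -(n : ℂ) * Zc n β (gJL n p f) x + 2 * I * Zc n β (Tt n (Fc n f)) x := by
    intro β
    have pdeev : (fun y => ∑ α, Zb n α (Zc n α (Fc n f)) y)
        =ᶠ[nhds x] (fun y => -(n : ℂ) * gJL n p f y) :=
      Filter.eventuallyEq_of_mem hxU fun y hy => hpde y hy
    have s1 : Zc n β (fun y => ∑ α, Zb n α (Zc n α (Fc n f)) y) x
        = -(n : ℂ) * Zc n β (gJL n p f) x := by
      rw [Zc_congr β pdeev]
      exact Zc_const_mul β (dAt hg) _
    have s2 : Zc n β (fun y => ∑ α, Zb n α (Zc n α (Fc n f)) y) x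
        = ∑ α, Zc n β (Zb n α (Zc n α (Fc n f))) x :=
      Zc_sum β Finset.univ _ fun α _ => dAt (hZbZc α α)
    have s3 : ∀ α : Fin n, Zc n β (Zb n α (Zc n α (Fc n f))) x
        = Zb n α (Zc n α (Zc n β (Fc n f))) x
          - 2 * I * (if β = α then 1 else 0) * Tt n (Zc n α (Fc n f)) x := by
      intro α
      rw [comm1 hU (hZc α) hx β α]
      congr 1
      exact Zb_congr α (Filter.eventuallyEq_of_mem hxU fun y hy => comm2 hU hF hy β α)
    have d0 : ∑ α, 2 * I * (if β = α then (1:ℂ) else 0) * Tt n (Zc n α (Fc n f)) x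
        = 2 * I * Tt n (Zc n β (Fc n f)) x := by
      rw [Finset.sum_congr rfl (fun α _ =>
        show _ = if β = α then 2 * I * Tt n (Zc n α (Fc n f)) x else 0 from by
          split <;> ring)]
      simp
    calc ∑ α, Zb n α (Zc n α (Zc n β (Fc n f))) x
        = ∑ α, (Zc n β (Zb n α (Zc n α (Fc n f))) x
            + 2 * I * (if β = α then 1 else 0) * Tt n (Zc n α (Fc n f)) x) := by
          refine Finset.sum_congr rfl fun α _ => ?_
          rw [s3 α]; ring
      _ = (∑ α, Zc n β (Zb n α (Zc n α (Fc n f))) x)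
            + 2 * I * Tt n (Zc n β (Fc n f)) x := by
          rw [Finset.sum_add_distrib, d0]
      _ = -(n : ℂ) * Zc n β (gJL n p f) x + 2 * I * Zc n β (Tt n (Fc n f)) x := by
          rw [← s2, s1, tcomm β]
  have hconjg : ∀ β, Zc n β (fun y => conj (gJL n p f y)) x
      = Zc n β (gJL n p f) x + 2 * I * Zc n β (Tt n (Fc n f)) x := by
    intro β
    have e : (fun y => conj (gJL n p f y))
        =ᶠ[nhds x] (fun y => gJL n p f y + 2 * I * Tt n (Fc n f) y) :=
      Filter.Eventually.of_forall fun y => conj_g p f y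
    rw [Zc_congr β e, Zc_add β (dAt hg) ((dAt hTtF).const_mul (2 * I)),
        Zc_const_mul β (dAt hTtF) (2 * I)]
  have key3' : ∀ β, ∑ α, Zb n α (Zc n α (Zc n β (Fc n f))) x
      = -(n : ℂ) * Zc n β (fun y => conj (gJL n p f y)) x
        + (2 * ((n : ℂ) + 1)) * (I * Zc n β (Tt n (Fc n f)) x) := by
    intro β
    rw [key3 β, hconjg β]; ring
  -- the E-vector identity
  have hEsum : ∀ α, ∑ β, Zb n α (Zc n β (Fc n f)) x * Zb n β (Fc n f) x
      = conj (Evec n p f α x) - gJL n p f x * Zb n α (Fc n f) x := by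
    intro α
    have hE : conj (Evec n p f α x)
        = ∑ β, (Zc n β (Zb n α (Fc n f)) x
            + conj (gJL n p f x) * (if α = β then 1 else 0)) * Zb n β (Fc n f) x := by
      unfold Evec Etens
      rw [map_sum]
      refine Finset.sum_congr rfl fun β _ => ?_
      rw [map_mul, map_add, map_mul, conj_Zc, conj_ZbZc,
        show conj (if α = β then (1:ℂ) else 0) = if α = β then (1:ℂ) else 0 from by
          split <;> simp]
    have hcomm : ∀ β : Fin n, Zb n α (Zc n β (Fc n f)) x
        = Zc n β (Zb n α (Fc n f)) x
          + 2 * I * (if β = α then 1 else 0) * Tt n (Fc n f) x := by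
      intro β
      rw [comm1 hU hF hx β α]; ring
    have d1 : ∑ β, 2 * I * (if β = α then (1:ℂ) else 0) * Tt n (Fc n f) x
          * Zb n β (Fc n f) x
        = 2 * I * Tt n (Fc n f) x * Zb n α (Fc n f) x := by
      rw [Finset.sum_congr rfl (fun β _ =>
        show _ = if β = α then 2 * I * Tt n (Fc n f) x * Zb n β (Fc n f) x else 0 from by
          split <;> ring)]
      simp
    have d2 : ∑ β, conj (gJL n p f x) * (if α = β then (1:ℂ) else 0) * Zb n β (Fc n f) x
        = conj (gJL n p f x) * Zb n α (Fc n f) x := by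
      rw [Finset.sum_congr rfl (fun β _ =>
        show _ = if α = β then conj (gJL n p f x) * Zb n β (Fc n f) x else 0 from by
          split <;> ring)]
      simp
    calc ∑ β, Zb n α (Zc n β (Fc n f)) x * Zb n β (Fc n f) x
        = ∑ β, ((Zc n β (Zb n α (Fc n f)) x
              + conj (gJL n p f x) * (if α = β then 1 else 0)) * Zb n β (Fc n f) x
            + (2 * I * (if β = α then 1 else 0) * Tt n (Fc n f) x * Zb n β (Fc n f) x
              - conj (gJL n p f x) * (if α = β then 1 else 0) * Zb n β (Fc n f) x)) := by
          refine Finset.sum_congr rfl fun β _ => ?_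
          rw [hcomm β]; ring
      _ = conj (Evec n p f α x)
            + (2 * I * Tt n (Fc n f) x * Zb n α (Fc n f) x
              - conj (gJL n p f x) * Zb n α (Fc n f) x) := by
          rw [Finset.sum_add_distrib, ← hE, Finset.sum_sub_distrib, d1, d2]
      _ = conj (Evec n p f α x) - gJL n p f x * Zb n α (Fc n f) x := by
          rw [conj_g p f x]; ring
  -- expansion of the divergence of D
  have hswap : ∀ α β, Zb n α (Zc n β (Zc n α (Fc n f))) x
      = Zb n α (Zc n α (Zc n β (Fc n f))) x := fun α β =>
    Zb_congr α (Filter.eventuallyEq_of_mem hxU fun y hy => comm2 hU hF hy β α)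
  have hZbZb : ∀ α β, Zb n α (Zb n β (Fc n f)) x
      = conj (Zc n α (Zc n β (Fc n f)) x) := fun α β => (conj_ZcZc β α x).symm
  have hconjD : ∀ α β, conj (Zc n α (Zc n β (Fc n f)) x)
      = conj (Dtens n f α β x) + 2 * Zb n α (Fc n f) x * Zb n β (Fc n f) x := by
    intro α β
    have e : Zc n α (Zc n β (Fc n f)) x
        = Dtens n f α β x + 2 * Zc n α (Fc n f) x * Zc n β (Fc n f) x := by
      rw [hcomm2x α β]; unfold Dtens; ring
    rw [e, map_add, map_mul, map_mul, map_ofNat, conj_Zc, conj_Zc]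
  have hDvec_eq : ∀ α, Zb n α (Dvec n f α) x
      = ∑ β, ((Zb n α (Zc n β (Zc n α (Fc n f))) x
          - (2 * Zb n α (Zc n α (Fc n f)) x * Zc n β (Fc n f) x
             + 2 * Zc n α (Fc n f) x * Zb n α (Zc n β (Fc n f)) x)) * Zb n β (Fc n f) x
        + Dtens n f α β x * Zb n α (Zb n β (Fc n f)) x) := by
    intro α
    have e0 : Zb n α (Dvec n f α) x
        = Zb n α (fun y => ∑ β, Dtens n f α β y * Zb n β (Fc n f) y) x := rfl
    rw [e0, Zb_sum α Finset.univ _ (fun β _ => (dAt (hDt α β)).fun_mul (dAt (hZb β)))]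
    refine Finset.sum_congr rfl fun β _ => ?_
    rw [Zb_mul α (dAt (hDt α β)) (dAt (hZb β))]
    have e1 : Zb n α (Dtens n f α β) x = Zb n α (Zc n β (Zc n α (Fc n f))) x
        - (2 * Zb n α (Zc n α (Fc n f)) x * Zc n β (Fc n f) x
           + 2 * Zc n α (Fc n f) x * Zb n α (Zc n β (Fc n f)) x) := by
      have e2 : Zb n α (Dtens n f α β) x
          = Zb n α (fun y => Zc n β (Zc n α (Fc n f)) y
              - 2 * Zc n α (Fc n f) y * Zc n β (Fc n f) y) x := rfl
      rw [e2, Zb_sub α (dAt (hZcZc α β))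
            (((dAt (hZc α)).const_mul 2).fun_mul (dAt (hZc β))),
          Zb_mul α ((dAt (hZc α)).const_mul 2) (dAt (hZc β)),
          Zb_const_mul α (dAt (hZc α)) 2]
    rw [e1]
  have hMain : ∀ α, Zb n α (Dvec n f α) x = ∑ β,
      (Zb n α (Zc n α (Zc n β (Fc n f))) x * Zb n β (Fc n f) x
        - 2 * Zb n α (Zc n α (Fc n f)) x * (Zc n β (Fc n f) x * Zb n β (Fc n f) x)
        - 2 * Zc n α (Fc n f) x * (Zb n α (Zc n β (Fc n f)) x * Zb n β (Fc n f) x)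
        + Dtens n f α β x * conj (Dtens n f α β x)
        + 2 * Zb n α (Fc n f) x * (Dtens n f α β x * Zb n β (Fc n f) x)) := by
    intro α
    rw [hDvec_eq α]
    refine Finset.sum_congr rfl fun β _ => ?_
    rw [hswap α β, hZbZb α β, hconjD α β]
    ring
  -- final assembly
  calc ∑ α, Zb n α (Dvec n f α) x
      = ∑ α, ∑ β,
        (Zb n α (Zc n α (Zc n β (Fc n f))) x * Zb n β (Fc n f) x
          - 2 * Zb n α (Zc n α (Fc n f)) x * (Zc n β (Fc n f) x * Zb n β (Fc n f) x)
          - 2 * Zc n α (Fc n f) x * (Zb n α (Zc n β (Fc n f)) x * Zb n β (Fc n f) x)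
          + Dtens n f α β x * conj (Dtens n f α β x)
          + 2 * Zb n α (Fc n f) x * (Dtens n f α β x * Zb n β (Fc n f) x)) :=
        Finset.sum_congr rfl fun α _ => hMain α
    _ = (∑ α, ∑ β, Zb n α (Zc n α (Zc n β (Fc n f))) x * Zb n β (Fc n f) x)
        - 2 * (∑ α, Zb n α (Zc n α (Fc n f)) x
            * (∑ β, Zc n β (Fc n f) x * Zb n β (Fc n f) x))
        - 2 * (∑ α, Zc n α (Fc n f) x
            * (∑ β, Zb n α (Zc n β (Fc n f)) x * Zb n β (Fc n f) x))
        + (∑ α, ∑ β, Dtens n f α β x * conj (Dtens n f α β x))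
        + 2 * (∑ α, Zb n α (Fc n f) x
            * (∑ β, Dtens n f α β x * Zb n β (Fc n f) x)) := by
        simp only [Finset.mul_sum, Finset.sum_mul]
        simp only [← Finset.sum_add_distrib, ← Finset.sum_sub_distrib]
        exact Finset.sum_congr rfl fun α _ => Finset.sum_congr rfl fun β _ => by ring
    _ = (∑ α, ∑ β, Dtens n f α β x * (starRingEnd ℂ) (Dtens n f α β x)) +
          2 * (∑ α, Zb n α (Fc n f) x * Dvec n f α x) -
          2 * (∑ α, Zc n α (Fc n f) x * (starRingEnd ℂ) (Evec n p f α x)) +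
          2 * ((n : ℂ) + 1) * (∑ α, Zb n α (Fc n f) x * Gvec n p f α x) -
          (n : ℂ) * ∑ α, Zb n α (Fc n f) x *
            Zc n α (fun y => (starRingEnd ℂ) (gJL n p f y)) x := by
      have hC1 : (∑ α, ∑ β, Zb n α (Zc n α (Zc n β (Fc n f))) x * Zb n β (Fc n f) x)
          = -(n:ℂ) * (∑ β, Zb n β (Fc n f) x
                * Zc n β (fun y => conj (gJL n p f y)) x)
            + (2*((n:ℂ)+1)*I) * (∑ β, Zb n β (Fc n f) x
                * Zc n β (Tt n (Fc n f)) x) := by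
        rw [Finset.sum_comm]
        calc ∑ β, ∑ α, Zb n α (Zc n α (Zc n β (Fc n f))) x * Zb n β (Fc n f) x
            = ∑ β, (∑ α, Zb n α (Zc n α (Zc n β (Fc n f))) x) * Zb n β (Fc n f) x := by
              refine Finset.sum_congr rfl fun β _ => ?_
              rw [Finset.sum_mul]
          _ = ∑ β, (-(n:ℂ) * (Zb n β (Fc n f) x
                  * Zc n β (fun y => conj (gJL n p f y)) x)
                + (2*((n:ℂ)+1)*I) * (Zb n β (Fc n f) x
                  * Zc n β (Tt n (Fc n f)) x)) := by
              refine Finset.sum_congr rfl fun β _ => ?_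
              rw [key3' β]; ring
          _ = _ := by
              rw [Finset.sum_add_distrib, ← Finset.mul_sum, ← Finset.mul_sum]
      have hC2 : (∑ α, Zb n α (Zc n α (Fc n f)) x
            * (∑ β, Zc n β (Fc n f) x * Zb n β (Fc n f) x))
          = -(n:ℂ) * gJL n p f x * (∑ β, Zc n β (Fc n f) x * Zb n β (Fc n f) x) := by
        rw [← Finset.sum_mul, hpdex]
      have hC3 : (∑ α, Zc n α (Fc n f) x
            * (∑ β, Zb n α (Zc n β (Fc n f)) x * Zb n β (Fc n f) x))
          = (∑ α, Zc n α (Fc n f) x * conj (Evec n p f α x))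
            - gJL n p f x * (∑ α, Zc n α (Fc n f) x * Zb n α (Fc n f) x) := by
        calc (∑ α, Zc n α (Fc n f) x
              * (∑ β, Zb n α (Zc n β (Fc n f)) x * Zb n β (Fc n f) x))
            = ∑ α, (Zc n α (Fc n f) x * conj (Evec n p f α x)
                - gJL n p f x * (Zc n α (Fc n f) x * Zb n α (Fc n f) x)) := by
              refine Finset.sum_congr rfl fun α _ => ?_
              rw [hEsum α]; ring
          _ = _ := by rw [Finset.sum_sub_distrib, ← Finset.mul_sum]
      have hC5 : (∑ α, Zb n α (Fc n f) x
            * (∑ β, Dtens n f α β x * Zb n β (Fc n f) x))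
          = ∑ α, Zb n α (Fc n f) x * Dvec n f α x := rfl
      have hG : (∑ α, Zb n α (Fc n f) x * Gvec n p f α x)
          = I * (∑ β, Zb n β (Fc n f) x * Zc n β (Tt n (Fc n f)) x)
            + gJL n p f x * (∑ β, Zc n β (Fc n f) x * Zb n β (Fc n f) x) := by
        calc ∑ α, Zb n α (Fc n f) x * Gvec n p f α x
            = ∑ α, (I * (Zb n α (Fc n f) x * Zc n α (Tt n (Fc n f)) x)
                + gJL n p f x * (Zc n α (Fc n f) x * Zb n α (Fc n f) x)) := by
              refine Finset.sum_congr rfl fun α _ => ?_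
              show Zb n α (Fc n f) x * (I * Zc n α (Tt n (Fc n f)) x
                + gJL n p f x * Zc n α (Fc n f) x) = _
              ring
          _ = _ := by rw [Finset.sum_add_distrib, ← Finset.mul_sum, ← Finset.mul_sum]
      rw [hC1, hC2, hC3, hC5, hG]
      ring

end mainlemma

end JLaux

theorem divergence_of_D (n : ℕ) (hn : 1 ≤ n) (p : ℝ)
    (U : Set ((Fin n → ℂ) × ℝ)) (hU : IsOpen U)
    (f : (Fin n → ℂ) × ℝ → ℝ) (hf : ContDiffOn ℝ (⊤ : ℕ∞) f U)
    (hpde : ∀ x ∈ U, ∑ α, Zb n α (Zc n α (Fc n f)) x = -(n : ℂ) * gJL n p f x) :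
    ∀ x ∈ U,
      ∑ α, Zb n α (Dvec n f α) x =
        (∑ α, ∑ β, Dtens n f α β x * (starRingEnd ℂ) (Dtens n f α β x)) +
          2 * (∑ α, Zb n α (Fc n f) x * Dvec n f α x) -
          2 * (∑ α, Zc n α (Fc n f) x * (starRingEnd ℂ) (Evec n p f α x)) +
          2 * ((n : ℂ) + 1) * (∑ α, Zb n α (Fc n f) x * Gvec n p f α x) -
          (n : ℂ) * ∑ α, Zb n α (Fc n f) x *
            Zc n α (fun y => (starRingEnd ℂ) (gJL n p f y)) x :=
  fun x hx => JLaux.main n p U hU f hf hpde x hx
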